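/- arXiv:math/0009187 — 2 statements merged into one kernel-verified Lean document; each statement's English description precedes it below -/
import Mathlib

section
/- Let Λ = O³ + Z·(1/λ, 1/λ, 1/λ) ⊂ K³ where K = Q(√−3), O = Z[ω], λ = √−3, and for integers j, k let Λ_{j,k} = {α ∈ O³ + k(1/λ,1/λ,1/λ) : α₀+α₁+α₂ ≡ j (mod λO)}. Then right multiplication by the unitary matrix M = (1/λ)[[1,1,1],[1,ω,ω²],[1,ω²,ω]] maps Λ_{j,k} onto Λ_{−k,j}, i.e. Λ_{j,k} M = Λ_{−k,j}. -/
noncomputable section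
open Complex

/-- `ω = exp(2πi/3)`. -/
def ω : ℂ := Complex.exp (2 * Real.pi * Complex.I / 3)

/-- `λ = ω - ω² = √-3`. -/
def lam : ℂ := ω - ω ^ 2

/-- `x` is an Eisenstein integer, i.e. `x ∈ 𝒪 = ℤ[ω]`. -/
def isO (x : ℂ) : Prop := ∃ m n : ℤ, x = (m : ℂ) + (n : ℂ) * ω

/-- `Λ_{j,k} = {α ∈ 𝒪³ + k(1/λ,1/λ,1/λ) : α₀+α₁+α₂ ≡ j (mod λ𝒪)}`. -/
def LamSet (j k : ℤ) : Set (Fin 3 → ℂ) :=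
  {α | (∀ i, isO (α i - k / lam)) ∧ isO ((α 0 + α 1 + α 2 - j) / lam)}

/-- The matrix `M = (1/λ)·[[1,1,1],[1,ω,ω²],[1,ω²,ω]]`. -/
def M : Matrix (Fin 3) (Fin 3) ℂ :=
  lam⁻¹ • !![1, 1, 1; 1, ω, ω ^ 2; 1, ω ^ 2, ω]

/-!
Write `α ∈ Λ_{j,k}` as `αᵢ = k/λ + aᵢ` with `aᵢ ∈ 𝒪` and put `t = (α₀ + α₁ + α₂ - j)/λ ∈ 𝒪`.
Since `(ω - 1)/λ = -ω²` and `(ω² - 1)/λ = ω`, the coordinates of `αM` satisfy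
`(αM)₀ - j/λ = t`, `(αM)₁ - j/λ = t + k - ω²a₁ + ωa₂`, `(αM)₂ - j/λ = t + k + ωa₁ - ω²a₂`,
while their sum is `3α₀/λ = -λα₀`; hence `Λ_{j,k} M ⊆ Λ_{-k,j}`.
For the reverse inclusion, `M² = -P` with `P` the transposition of the last two coordinates,
so `M⁴ = 1` and every `β ∈ Λ_{-k,j}` is the image of `βM³`, which lies in `Λ_{j,k}` by three more
applications of the inclusion.
-/

lemma isPrimitiveRoot_ω : IsPrimitiveRoot ω 3 := by
  simpa [ω] using Complex.isPrimitiveRoot_exp 3 (by norm_num)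

lemma ω_sq_add_ω_add_one : ω ^ 2 + ω + 1 = 0 := by
  have := isPrimitiveRoot_ω.geom_sum_eq_zero (by norm_num)
  simp only [Finset.sum_range_succ, Finset.sum_range_zero] at this
  linear_combination this

lemma lam_sq : lam ^ 2 = -3 := by
  have := ω_sq_add_ω_add_one
  rw [lam]; grind

lemma lam_ne_zero : lam ≠ 0 := by
  intro h; simpa [h] using lam_sq

def eisensteinIntegers : Subring ℂ where
  carrier := {x | isO x}
  mul_mem' := by
    rintro _ _ ⟨m, n, rfl⟩ ⟨p, q, rfl⟩
    exact ⟨m * p - n * q, m * q + n * p - n * q, by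
      push_cast; linear_combination (n * q : ℂ) * ω_sq_add_ω_add_one⟩
  one_mem' := ⟨1, 0, by simp⟩
  add_mem' := by
    rintro _ _ ⟨m, n, rfl⟩ ⟨p, q, rfl⟩
    exact ⟨m + p, n + q, by push_cast; ring⟩
  zero_mem' := ⟨0, 0, by simp⟩
  neg_mem' := by
    rintro _ ⟨m, n, rfl⟩
    exact ⟨-m, -n, by push_cast; ring⟩

lemma mem_eisensteinIntegers {x : ℂ} : x ∈ eisensteinIntegers ↔ isO x := Iff.rfl

lemma ω_mem_eisensteinIntegers : ω ∈ eisensteinIntegers := ⟨0, 1, by simp⟩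

open Matrix

lemma vecMul_M_zero (v : Fin 3 → ℂ) : (v ᵥ* M) 0 = (v 0 + v 1 + v 2) / lam := by
  simp only [vecMul, dotProduct, M, Fin.sum_univ_three, Matrix.smul_apply, of_apply, cons_val',
    cons_val, cons_val_zero, cons_val_one, cons_val_fin_one, smul_eq_mul, mul_one]
  ring

lemma vecMul_M_one (v : Fin 3 → ℂ) : (v ᵥ* M) 1 = (v 0 + v 1 * ω + v 2 * ω ^ 2) / lam := by
  simp only [vecMul, dotProduct, M, Fin.sum_univ_three, Matrix.smul_apply, of_apply, cons_val',
    cons_val, cons_val_zero, cons_val_one, cons_val_fin_one, smul_eq_mul, mul_one]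
  ring

lemma vecMul_M_two (v : Fin 3 → ℂ) : (v ᵥ* M) 2 = (v 0 + v 1 * ω ^ 2 + v 2 * ω) / lam := by
  simp only [vecMul, dotProduct, M, Fin.sum_univ_three, Matrix.smul_apply, of_apply, cons_val',
    cons_val, cons_val_zero, cons_val_one, cons_val_fin_one, smul_eq_mul, mul_one]
  ring

lemma vecMul_M_mem_LamSet {j k : ℤ} {α : Fin 3 → ℂ} (hα : α ∈ LamSet j k) :
    α ᵥ* M ∈ LamSet (-k) j := by
  have hω := ω_sq_add_ω_add_one
  have hlam := lam_ne_zero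
  have coord_zero : (α ᵥ* M) 0 - j / lam = (α 0 + α 1 + α 2 - j) / lam := by
    rw [vecMul_M_zero]; ring
  have coord_one : (α ᵥ* M) 1 - j / lam = (α 0 + α 1 + α 2 - j) / lam + k
      - ω ^ 2 * (α 1 - k / lam) + ω * (α 2 - k / lam) := by
    rw [vecMul_M_one]; field_simp; unfold lam; grind
  have coord_two : (α ᵥ* M) 2 - j / lam = (α 0 + α 1 + α 2 - j) / lam + k
      + ω * (α 1 - k / lam) - ω ^ 2 * (α 2 - k / lam) := by
    rw [vecMul_M_two]; field_simp; unfold lam; grind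
  have coord_sum : ((α ᵥ* M) 0 + (α ᵥ* M) 1 + (α ᵥ* M) 2 - ((-k : ℤ) : ℂ)) / lam
      = -(α 0 - k / lam) := by
    rw [vecMul_M_zero, vecMul_M_one, vecMul_M_two]; push_cast; field_simp
    linear_combination (α 1 + α 2) * hω + α 0 * lam_sq
  obtain ⟨hcoord, hsum⟩ := hα
  simp only [← mem_eisensteinIntegers] at hcoord hsum
  have hω' := ω_mem_eisensteinIntegers
  refine ⟨fun i => ?_, by rw [← mem_eisensteinIntegers, coord_sum]; exact neg_mem (hcoord 0)⟩
  rw [← mem_eisensteinIntegers]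
  fin_cases i
  · exact coord_zero ▸ hsum
  · exact coord_one ▸ add_mem
      (sub_mem (add_mem hsum (intCast_mem _ k)) (mul_mem (pow_mem hω' 2) (hcoord 1)))
      (mul_mem hω' (hcoord 2))
  · exact coord_two ▸ sub_mem
      (add_mem (add_mem hsum (intCast_mem _ k)) (mul_mem hω' (hcoord 1)))
      (mul_mem (pow_mem hω' 2) (hcoord 2))

lemma M_mul_M : M * M = !![-1, 0, 0; 0, 0, -1; 0, -1, 0] := by
  have hω := ω_sq_add_ω_add_one
  have hlam := lam_ne_zero
  have hlam2 := lam_sq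
  ext i j
  fin_cases i <;> fin_cases j <;>
    simp only [M, mul_apply, Fin.sum_univ_three, Matrix.smul_apply, of_apply, cons_val',
      cons_val_fin_one, cons_val, cons_val_zero, cons_val_one, Fin.isValue, Fin.mk_one,
      Fin.zero_eta, Fin.reduceFinMk, smul_eq_mul] <;> grind

lemma M_pow_four : M ^ 4 = 1 := by
  rw [show 4 = 2 * 2 from rfl, pow_mul, sq M, M_mul_M]
  ext i j
  fin_cases i <;> fin_cases j <;> simp [sq, Matrix.mul_apply, Fin.sum_univ_three]

/-- Right multiplication by `M` maps `Λ_{j,k}` onto `Λ_{-k,j}`. -/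
theorem LamSet_mul_M (j k : ℤ) :
    (fun α => Matrix.vecMul α M) '' LamSet j k = LamSet (-k) j := by
  refine subset_antisymm (Set.image_subset_iff.2 fun α => vecMul_M_mem_LamSet) fun β hβ => ?_
  refine ⟨β ᵥ* M ᵥ* M ᵥ* M, ?_, ?_⟩
  · simpa only [neg_neg] using vecMul_M_mem_LamSet (vecMul_M_mem_LamSet (vecMul_M_mem_LamSet hβ))
  · calc β ᵥ* M ᵥ* M ᵥ* M ᵥ* M = β ᵥ* M ^ 4 := by
          simp only [vecMul_vecMul, pow_succ, pow_zero, one_mul]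
      _ = β := by rw [M_pow_four, vecMul_one]
end
end

section
/- For 0 < q < 1: a(q)·a(q²) = b(q)·b(q²) + c(q)·c(q²), where a(q) = Σ_{m,n∈Z} q^{m²+mn+n²}, b(q) = Σ_{m,n∈Z} ω^{m−n} q^{m²+mn+n²}, c(q) = Σ_{m,n∈Z} q^{(m+1/3)²+(m+1/3)(n+1/3)+(n+1/3)²}. -/
noncomputable section
open Complex

/-- `a(q) = Σ_{m,n∈ℤ} q^{m²+mn+n²}`. -/
def aq (q : ℝ) : ℂ :=
  ∑' p : ℤ × ℤ,
    (q : ℂ) ^ (((p.1 : ℝ) ^ 2 + (p.1 : ℝ) * (p.2 : ℝ) + (p.2 : ℝ) ^ 2 : ℝ) : ℂ)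

/-- `b(q) = Σ_{m,n∈ℤ} ω^{m-n} q^{m²+mn+n²}`. -/
def bq (q : ℝ) : ℂ :=
  ∑' p : ℤ × ℤ,
    ω ^ (p.1 - p.2) *
      (q : ℂ) ^ (((p.1 : ℝ) ^ 2 + (p.1 : ℝ) * (p.2 : ℝ) + (p.2 : ℝ) ^ 2 : ℝ) : ℂ)

/-- `c(q) = Σ_{m,n∈ℤ} q^{(m+1/3)²+(m+1/3)(n+1/3)+(n+1/3)²}`. -/
def cq (q : ℝ) : ℂ :=
  ∑' p : ℤ × ℤ,
    (q : ℂ) ^ ((((p.1 : ℝ) + 1 / 3) ^ 2 + ((p.1 : ℝ) + 1 / 3) * ((p.2 : ℝ) + 1 / 3)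
      + ((p.2 : ℝ) + 1 / 3) ^ 2 : ℝ) : ℂ)

/-!
Write `N(m, n) = m² + mn + n²`. Expanding the products, `a(q)a(q²)` and `b(q)b(q²)` are sums of
`q ^ (N z + 2 N w)` over pairs `(z, w)` of lattice points, the latter weighted by `ω ^ ℓ` with
`ℓ = (z + w)₁ - (z + w)₂`. Swapping coordinates negates `ℓ`, so the classes `ℓ ≡ 1` and `ℓ ≡ 2`
(mod 3) contribute equally, and since `(1 - ω) + (1 - ω²) = 3` the difference of the two products
is `3 S`, with `S` the sum over `ℓ ≡ 1`.

On the other side `c(q)` is the sum of `q ^ (N x / 3)` over the points with `x₁ - x₂ ≡ 1`, and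
`(j, z, w) ↦ (ωʲ (z - 2w), z + w)` is a bijection from `Fin 3 × {ℓ ≡ 1}` onto pairs `(x, y)` of
such points, carrying `N z + 2 N w` to `(N x + 2 N y) / 3` by the parallelogram law. Hence
`c(q)c(q²) = 3 S` as well.
-/

namespace Borwein

lemma isPrimitiveRoot_omega : IsPrimitiveRoot ω 3 := by
  simpa [ω] using Complex.isPrimitiveRoot_exp 3 (by norm_num)

lemma omega_ne_zero : ω ≠ 0 :=
  Complex.exp_ne_zero _

lemma norm_omega : ‖ω‖ = 1 :=
  isPrimitiveRoot_omega.norm'_eq_one (by norm_num)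

lemma omega_zpow_eq_pow_val (k : ℤ) : ω ^ k = ω ^ (k : ZMod 3).val := by
  have hdvd : ((3 : ℕ) : ℤ) ∣ k - (k : ZMod 3).val := by rw [ZMod.val_intCast]; omega
  calc ω ^ k = ω ^ (k - (k : ZMod 3).val) * ω ^ ((k : ZMod 3).val : ℤ) := by
        rw [← zpow_add₀ omega_ne_zero, sub_add_cancel]
    _ = ω ^ (k : ZMod 3).val := by
        rw [(isPrimitiveRoot_omega.zpow_eq_one_iff_dvd _).mpr hdvd, one_mul, zpow_natCast]

lemma omega_sq_add_omega_add_one : ω ^ 2 + ω + 1 = 0 := by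
  have := isPrimitiveRoot_omega.geom_sum_eq_zero (by norm_num)
  simp only [Finset.sum_range_succ, Finset.sum_range_zero] at this
  linear_combination this

theorem tsum_eq_tsum_omega_zpow_mul_add {α : Type*} {f : α → ℂ} (hf : Summable f) (g : α → ℤ)
    (σ : α ≃ α) (hgσ : ∀ a, g (σ a) = -g a) (hfσ : ∀ a, f (σ a) = f a) :
    ∑' a, f a = ∑' a, ω ^ g a * f a + 3 * ∑' a : {a // (g a : ZMod 3) = 1}, f a := by
  set r : α → ZMod 3 := fun a => (g a : ZMod 3)
  have hωf : Summable fun a => ω ^ g a * f a :=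
    (summable_norm_iff.mpr hf).of_norm_bounded fun a => by
      rw [norm_mul, norm_zpow, norm_omega, one_zpow, one_mul]
  have hfiber (c : ZMod 3) :
      ∑' a : r ⁻¹' {c}, (f a - ω ^ g a * f a) = (1 - ω ^ c.val) * ∑' a : r ⁻¹' {c}, f a := by
    rw [← tsum_mul_left]
    refine tsum_congr fun a => ?_
    rw [omega_zpow_eq_pow_val, show (g a : ZMod 3) = c from a.2]
    ring
  have hswap : ∑' a : r ⁻¹' {2}, f a = ∑' a : r ⁻¹' {1}, f a := by
    refine (Equiv.tsum_eq (σ.subtypeEquiv fun a => ?_) _).symm.trans (tsum_congr fun a => ?_)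
    · simp only [r, Set.mem_preimage, Set.mem_singleton_iff, hgσ, Int.cast_neg, neg_eq_iff_eq_neg]
      rfl
    · exact hfσ a
  rw [← sub_eq_iff_eq_add', ← hf.tsum_sub hωf, ← ((hf.sub hωf).hasSum.tsum_fiberwise r).tsum_eq,
    tsum_fintype, show ∀ F : ZMod 3 → ℂ, ∑ c, F c = F 0 + F 1 + F 2 from Fin.sum_univ_three]
  simp only [hfiber, hswap]
  change _ = 3 * ∑' a : r ⁻¹' {1}, f a
  rw [show ZMod.val (0 : ZMod 3) = 0 from rfl, show ZMod.val (1 : ZMod 3) = 1 from rfl,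
    show ZMod.val (2 : ZMod 3) = 2 from rfl]
  linear_combination (-∑' a : r ⁻¹' {1}, f a) * omega_sq_add_omega_add_one

/-- The norm of `m - nω` in `ℤ[ω]`. -/
def eisNorm (p : ℤ × ℤ) : ℝ := (p.1 : ℝ) ^ 2 + (p.1 : ℝ) * (p.2 : ℝ) + (p.2 : ℝ) ^ 2

def residue (p : ℤ × ℤ) : ZMod 3 := ((p.1 - p.2 : ℤ) : ZMod 3)

/-- Multiplication by `ω²`, in the coordinates of `eisNorm`. -/
def rot {R : Type*} [CommRing R] (p : R × R) : R × R := (-p.1 - p.2, p.1)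

def reduceMod3 (p : ℤ × ℤ) : ZMod 3 × ZMod 3 := ((p.1 : ZMod 3), (p.2 : ZMod 3))

lemma eisNorm_swap (p : ℤ × ℤ) : eisNorm p.swap = eisNorm p := by
  simp only [eisNorm, Prod.fst_swap, Prod.snd_swap]; ring

lemma eisNorm_rot (p : ℤ × ℤ) : eisNorm (rot p) = eisNorm p := by
  simp only [eisNorm, rot]; push_cast; ring

lemma eisNorm_iterate_rot (j : ℕ) (p : ℤ × ℤ) : eisNorm (rot^[j] p) = eisNorm p :=
  congrFun (Function.iterate_invariant (g := eisNorm) (funext eisNorm_rot) j) p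

lemma eisNorm_sub_two_smul_add (z w : ℤ × ℤ) :
    eisNorm (z - 2 • w) + 2 * eisNorm (z + w) = 3 * (eisNorm z + 2 * eisNorm w) := by
  simp only [eisNorm, Prod.fst_sub, Prod.snd_sub, Prod.fst_add, Prod.snd_add, Prod.smul_fst,
    Prod.smul_snd, Int.nsmul_eq_mul]
  push_cast; ring

lemma rot_injective : Function.Injective (rot : ℤ × ℤ → ℤ × ℤ) := by
  intro a b h
  simp only [rot, Prod.mk.injEq] at h
  exact Prod.ext h.2 (by omega)

lemma iterate_rot_three_mul {R : Type*} [CommRing R] (j : ℕ) (p : R × R) : rot^[3 * j] p = p := by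
  have h3 : rot^[3] = (id : R × R → R × R) := funext fun p => by
    simp only [Function.iterate_succ, Function.iterate_zero, Function.comp_apply, rot, id]
    ext <;> ring
  rw [Function.iterate_mul, h3, Function.iterate_id, id]

lemma reduceMod3_rot (p : ℤ × ℤ) : reduceMod3 (rot p) = rot (reduceMod3 p) := by
  simp only [reduceMod3, rot]; push_cast; rfl

lemma reduceMod3_iterate_rot (j : ℕ) (p : ℤ × ℤ) :
    reduceMod3 (rot^[j] p) = rot^[j] (reduceMod3 p) :=
  (Function.Semiconj.iterate_right reduceMod3_rot j) p

lemma residue_eq_reduceMod3 (p : ℤ × ℤ) : residue p = (reduceMod3 p).1 - (reduceMod3 p).2 := by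
  simp [residue, reduceMod3]

lemma reduceMod3_eq_iff {u y : ℤ × ℤ} : reduceMod3 u = reduceMod3 y ↔ ∃ t, y = u + 3 • t := by
  simp only [reduceMod3, Prod.mk.injEq, ZMod.intCast_eq_intCast_iff_dvd_sub]
  constructor
  · rintro ⟨⟨a, ha⟩, ⟨b, hb⟩⟩
    refine ⟨(a, b), Prod.ext ?_ ?_⟩ <;>
      simp only [Prod.fst_add, Prod.snd_add, Prod.smul_mk, Int.nsmul_eq_mul, Nat.cast_ofNat] <;>
      omega
  · rintro ⟨t, rfl⟩
    simp

lemma reduceMod3_sub_two_smul (z w : ℤ × ℤ) : reduceMod3 (z - 2 • w) = reduceMod3 (z + w) :=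
  reduceMod3_eq_iff.mpr ⟨w, by abel⟩

lemma residue_rot (p : ℤ × ℤ) : residue (rot p) = residue p := by
  simp only [residue, rot]
  push_cast
  have h3 : (3 : ZMod 3) = 0 := rfl
  linear_combination (-(p.1 : ZMod 3)) * h3

lemma residue_iterate_rot (j : ℕ) (p : ℤ × ℤ) : residue (rot^[j] p) = residue p :=
  congrFun (Function.iterate_invariant (g := residue) (funext residue_rot) j) p

lemma residue_eq_one_iff (x : ℤ × ℤ) : residue x = 1 ↔ (3 : ℤ) ∣ x.1 - x.2 - 1 := by
  rw [residue, ← Int.cast_one, ZMod.intCast_eq_intCast_iff_dvd_sub]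
  constructor <;> intro h <;> omega

/-- In the coordinates of `eisNorm`, `shiftEquiv p = (2 + ω)(p + (1/3, 1/3))`, and `2 + ω` has
norm `3`. -/
def shiftEquiv : ℤ × ℤ ≃ {x : ℤ × ℤ // residue x = 1} where
  toFun p := ⟨(2 * p.1 + p.2 + 1, p.2 - p.1), (residue_eq_one_iff _).mpr ⟨p.1, by ring⟩⟩
  invFun x := ((x.1.1 - x.1.2 - 1) / 3, (x.1.1 + 2 * x.1.2 - 1) / 3)
  left_inv p := by ext <;> dsimp only <;> omega
  right_inv x := by
    have := (residue_eq_one_iff x).mp x.2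
    ext <;> dsimp only <;> omega

lemma eisNorm_shiftEquiv (p : ℤ × ℤ) :
    eisNorm (shiftEquiv p) / 3 = ((p.1 : ℝ) + 1 / 3) ^ 2 + ((p.1 : ℝ) + 1 / 3) * ((p.2 : ℝ) + 1 / 3)
      + ((p.2 : ℝ) + 1 / 3) ^ 2 := by
  simp only [shiftEquiv, Equiv.coe_fn_mk, eisNorm]
  push_cast
  ring

lemma iterate_rot_injective_mod3 :
    ∀ P : ZMod 3 × ZMod 3, P.1 - P.2 = 1 → ∀ j k : Fin 3, rot^[j] P = rot^[k] P → j = k := by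
  decide

lemma exists_iterate_rot_eq_mod3 :
    ∀ P R : ZMod 3 × ZMod 3, P.1 - P.2 = 1 → R.1 - R.2 = 1 → ∃ j : Fin 3, rot^[j] P = R := by
  decide

lemma residue_sub_two_smul (z w : ℤ × ℤ) : residue (z - 2 • w) = residue (z + w) := by
  rw [residue_eq_reduceMod3, reduceMod3_sub_two_smul, ← residue_eq_reduceMod3]

def tripleCover (x : Fin 3 × {v : (ℤ × ℤ) × (ℤ × ℤ) // residue (v.1 + v.2) = 1}) :
    {x : ℤ × ℤ // residue x = 1} × {y : ℤ × ℤ // residue y = 1} :=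
  (⟨rot^[x.1] (x.2.1.1 - 2 • x.2.1.2), by
      rw [residue_iterate_rot, residue_sub_two_smul]; exact x.2.2⟩,
    ⟨x.2.1.1 + x.2.1.2, x.2.2⟩)

lemma tripleCover_injective : Function.Injective tripleCover := by
  rintro ⟨j, ⟨⟨z, w⟩, h⟩⟩ ⟨k, ⟨⟨z', w'⟩, h'⟩⟩ heq
  simp only [tripleCover, Prod.mk.injEq, Subtype.mk.injEq] at heq
  obtain ⟨hu, hy⟩ := heq
  have hjk : j = k := by
    refine iterate_rot_injective_mod3 (reduceMod3 (z + w)) (by rw [← residue_eq_reduceMod3]; exact h) j k ?_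
    calc rot^[j] (reduceMod3 (z + w)) = reduceMod3 (rot^[j] (z - 2 • w)) := by
          rw [reduceMod3_iterate_rot, reduceMod3_sub_two_smul]
      _ = rot^[k] (reduceMod3 (z + w)) := by
          rw [hu, reduceMod3_iterate_rot, reduceMod3_sub_two_smul, hy]
  subst hjk
  have hu' := rot_injective.iterate j hu
  have h3 : 3 • w = 3 • w' :=
    calc 3 • w = (z + w) - (z - 2 • w) := by abel
      _ = 3 • w' := by rw [hy, hu']; abel
  have hw : w = w' := smul_right_injective (ℤ × ℤ) three_ne_zero h3
  subst hw
  obtain rfl : z = z' := add_right_cancel hy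
  rfl

lemma tripleCover_surjective : Function.Surjective tripleCover := by
  rintro ⟨⟨x, hx⟩, ⟨y, hy⟩⟩
  obtain ⟨j, hj⟩ := exists_iterate_rot_eq_mod3 (reduceMod3 y) (reduceMod3 x)
    (by rw [← residue_eq_reduceMod3]; exact hy) (by rw [← residue_eq_reduceMod3]; exact hx)
  have hxj : rot^[j] (rot^[2 * j] x) = x := by
    rw [← Function.iterate_add_apply, show (j : ℕ) + 2 * j = 3 * j by ring, iterate_rot_three_mul]
  obtain ⟨t, ht⟩ : ∃ t, y = rot^[2 * j] x + 3 • t := by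
    rw [← reduceMod3_eq_iff, reduceMod3_iterate_rot, ← hj, ← Function.iterate_add_apply,
      show 2 * (j : ℕ) + j = 3 * j by ring, iterate_rot_three_mul]
  refine ⟨(j, ⟨(y - t, t), by simpa using hy⟩), ?_⟩
  have hu : y - t - 2 • t = rot^[2 * j] x := by rw [ht]; abel
  simp only [tripleCover, hu, hxj, sub_add_cancel]

lemma eisNorm_tripleCover (x : Fin 3 × {v : (ℤ × ℤ) × (ℤ × ℤ) // residue (v.1 + v.2) = 1}) :
    eisNorm (tripleCover x).1 / 3 + 2 * (eisNorm (tripleCover x).2 / 3) =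
      eisNorm x.2.1.1 + 2 * eisNorm x.2.1.2 := by
  have := eisNorm_sub_two_smul_add x.2.1.1 x.2.1.2
  simp only [tripleCover, eisNorm_iterate_rot]
  linarith

lemma tripleCover_bijective : Function.Bijective tripleCover :=
  ⟨tripleCover_injective, tripleCover_surjective⟩

theorem tsum_residue_one_prod {E : Type*} [NormedAddCommGroup E] [CompleteSpace E] (F : ℝ → E)
    (hF : Summable fun x : {x : ℤ × ℤ // residue x = 1} × {y : ℤ × ℤ // residue y = 1} =>
      F (eisNorm x.1 / 3 + 2 * (eisNorm x.2 / 3))) :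
    ∑' x : {x : ℤ × ℤ // residue x = 1} × {y : ℤ × ℤ // residue y = 1},
        F (eisNorm x.1 / 3 + 2 * (eisNorm x.2 / 3)) =
      3 • ∑' v : {v : (ℤ × ℤ) × (ℤ × ℤ) // residue (v.1 + v.2) = 1},
        F (eisNorm v.1.1 + 2 * eisNorm v.1.2) := by
  let e := Equiv.ofBijective tripleCover tripleCover_bijective
  have hF' := e.summable_iff.mpr hF
  simp only [e, Function.comp_def, Equiv.ofBijective_apply, eisNorm_tripleCover] at hF'
  rw [← e.tsum_eq]
  simp only [e, Equiv.ofBijective_apply, eisNorm_tripleCover]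
  rw [hF'.tsum_prod, tsum_fintype]
  simp only [Finset.sum_const, Finset.card_univ, Fintype.card_fin]

lemma summable_rpow_abs_int {r : ℝ} (hr0 : 0 < r) (hr1 : r < 1) :
    Summable fun n : ℤ => r ^ |(n : ℝ)| := by
  have h := summable_geometric_of_lt_one hr0.le hr1
  refine Summable.of_nat_of_neg ?_ ?_ <;> simpa [Real.rpow_natCast] using h

lemma abs_add_abs_sub_one_le_eisNorm (p : ℤ × ℤ) : |(p.1 : ℝ)| + |(p.2 : ℝ)| - 1 ≤ eisNorm p := by
  simp only [eisNorm]
  nlinarith [sq_nonneg ((p.1 : ℝ) + p.2), sq_nonneg (|(p.1 : ℝ)| - 1), sq_nonneg (|(p.2 : ℝ)| - 1),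
    sq_abs (p.1 : ℝ), sq_abs (p.2 : ℝ)]

theorem summable_rpow_eisNorm {r : ℝ} (hr0 : 0 < r) (hr1 : r < 1) :
    Summable fun p : ℤ × ℤ => r ^ eisNorm p := by
  have hprod := ((summable_rpow_abs_int hr0 hr1).mul_of_nonneg (summable_rpow_abs_int hr0 hr1)
    (fun _ => by positivity) (fun _ => by positivity)).mul_left r⁻¹
  refine Summable.of_nonneg_of_le (fun p => by positivity) (fun p => ?_) hprod
  calc r ^ eisNorm p ≤ r ^ (|(p.1 : ℝ)| + |(p.2 : ℝ)| - 1) :=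
        Real.rpow_le_rpow_of_exponent_ge hr0 hr1.le (abs_add_abs_sub_one_le_eisNorm p)
    _ = r⁻¹ * (r ^ |(p.1 : ℝ)| * r ^ |(p.2 : ℝ)|) := by
        rw [Real.rpow_sub hr0, Real.rpow_add hr0, Real.rpow_one]; ring

lemma summable_rpow_eisNorm_div_three {r : ℝ} (hr0 : 0 < r) (hr1 : r < 1) :
    Summable fun p : ℤ × ℤ => r ^ (eisNorm p / 3) := by
  simpa only [← Real.rpow_mul hr0.le, div_eq_inv_mul] using
    summable_rpow_eisNorm (Real.rpow_pos_of_pos hr0 3⁻¹) (Real.rpow_lt_one hr0.le hr1 (by norm_num))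

lemma rpow_mul_sq_rpow {q : ℝ} (hq : 0 < q) (s t : ℝ) : q ^ s * (q ^ 2) ^ t = q ^ (s + 2 * t) := by
  rw [← Real.rpow_natCast, ← Real.rpow_mul hq.le, ← Real.rpow_add hq]
  norm_num

lemma hasSum_mul_rpow {ι : Type*} {q : ℝ} (hq : 0 < q) {a : ι → ℂ} (ha : ∀ i, ‖a i‖ = 1)
    {f g : ι → ℝ} (hf : Summable fun i => q ^ f i) (hg : Summable fun i => (q ^ 2) ^ g i) :
    HasSum (fun x : ι × ι => a x.1 * a x.2 * ((q ^ (f x.1 + 2 * g x.2) : ℝ) : ℂ))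
      ((∑' i, a i * ((q ^ f i : ℝ) : ℂ)) * ∑' i, a i * (((q ^ 2) ^ g i : ℝ) : ℂ)) := by
  have hnorm {r : ℝ} (hr : 0 < r) {h : ι → ℝ} (hs : Summable fun i => r ^ h i) :
      Summable fun i => ‖a i * ((r ^ h i : ℝ) : ℂ)‖ :=
    hs.congr fun i => by
      rw [norm_mul, ha, one_mul, Complex.norm_real, Real.norm_of_nonneg (by positivity)]
  have hu := hnorm hq hf
  have hv := hnorm (by positivity) hg
  rw [tsum_mul_tsum_of_summable_norm hu hv]
  refine (summable_mul_of_summable_norm hu hv).hasSum.congr_fun fun x => ?_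
  rw [← rpow_mul_sq_rpow hq, Complex.ofReal_mul]
  ring

variable {q : ℝ}

lemma aq_eq (hq : 0 ≤ q) : aq q = ∑' p, ((q ^ eisNorm p : ℝ) : ℂ) := by
  simp only [aq, eisNorm, Complex.ofReal_cpow hq]

lemma bq_eq (hq : 0 ≤ q) : bq q = ∑' p : ℤ × ℤ, ω ^ (p.1 - p.2) * ((q ^ eisNorm p : ℝ) : ℂ) := by
  simp only [bq, eisNorm, Complex.ofReal_cpow hq]

lemma cq_eq (hq : 0 ≤ q) :
    cq q = ∑' x : {x : ℤ × ℤ // residue x = 1}, ((q ^ (eisNorm x / 3) : ℝ) : ℂ) := by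
  rw [cq, ← shiftEquiv.tsum_eq]
  simp only [eisNorm_shiftEquiv, Complex.ofReal_cpow hq]

lemma hasSum_aq_mul_aq_sq (hq0 : 0 < q) (hq1 : q < 1) :
    HasSum (fun v : (ℤ × ℤ) × (ℤ × ℤ) => ((q ^ (eisNorm v.1 + 2 * eisNorm v.2) : ℝ) : ℂ))
      (aq q * aq (q ^ 2)) := by
  have h := hasSum_mul_rpow hq0 (a := fun _ => 1) (fun _ => norm_one)
    (summable_rpow_eisNorm hq0 hq1)
    (summable_rpow_eisNorm (by positivity) (pow_lt_one₀ hq0.le hq1 two_ne_zero))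
  simp only [one_mul] at h
  rwa [aq_eq hq0.le, aq_eq (sq_nonneg q)]

lemma hasSum_bq_mul_bq_sq (hq0 : 0 < q) (hq1 : q < 1) :
    HasSum (fun v : (ℤ × ℤ) × (ℤ × ℤ) =>
        ω ^ ((v.1 + v.2).1 - (v.1 + v.2).2) * ((q ^ (eisNorm v.1 + 2 * eisNorm v.2) : ℝ) : ℂ))
      (bq q * bq (q ^ 2)) := by
  have h := hasSum_mul_rpow hq0 (a := fun p : ℤ × ℤ => ω ^ (p.1 - p.2))
    (fun _ => by rw [norm_zpow, norm_omega, one_zpow]) (summable_rpow_eisNorm hq0 hq1)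
    (summable_rpow_eisNorm (by positivity) (pow_lt_one₀ hq0.le hq1 two_ne_zero))
  rw [bq_eq hq0.le, bq_eq (sq_nonneg q)]
  refine h.congr_fun fun v => ?_
  rw [← zpow_add₀ omega_ne_zero, Prod.fst_add, Prod.snd_add]
  ring_nf

lemma cq_mul_cq_sq (hq0 : 0 < q) (hq1 : q < 1) :
    cq q * cq (q ^ 2) = 3 * ∑' v : {v : (ℤ × ℤ) × (ℤ × ℤ) // residue (v.1 + v.2) = 1},
      ((q ^ (eisNorm v.1.1 + 2 * eisNorm v.1.2) : ℝ) : ℂ) := by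
  have h := hasSum_mul_rpow hq0 (ι := {x : ℤ × ℤ // residue x = 1}) (a := fun _ => 1)
    (fun _ => norm_one)
    ((summable_rpow_eisNorm_div_three hq0 hq1).comp_injective Subtype.val_injective)
    ((summable_rpow_eisNorm_div_three (by positivity)
      (pow_lt_one₀ hq0.le hq1 two_ne_zero)).comp_injective Subtype.val_injective)
  simp only [one_mul] at h
  rw [cq_eq hq0.le, cq_eq (sq_nonneg q), ← h.tsum_eq,
    tsum_residue_one_prod (fun t => ((q ^ t : ℝ) : ℂ)) h.summable, nsmul_eq_mul, Nat.cast_ofNat]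

end Borwein

open Borwein in
/-- `a(q)a(q²) = b(q)b(q²) + c(q)c(q²)`. -/
theorem borwein_mul (q : ℝ) (hq0 : 0 < q) (hq1 : q < 1) :
    aq q * aq (q ^ 2) = bq q * bq (q ^ 2) + cq q * cq (q ^ 2) := by
  rw [← (hasSum_aq_mul_aq_sq hq0 hq1).tsum_eq, ← (hasSum_bq_mul_bq_sq hq0 hq1).tsum_eq,
    cq_mul_cq_sq hq0 hq1]
  exact tsum_eq_tsum_omega_zpow_mul_add (hasSum_aq_mul_aq_sq hq0 hq1).summable _
    (Equiv.prodCongr (Equiv.prodComm ℤ ℤ) (Equiv.prodComm ℤ ℤ)) (fun v => by simp)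
    (fun v => by simp [eisNorm_swap])
end
end
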